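/- If u is a vertex of degree 1 in a finite graph G and v is its unique neighbour, then Ind(G) is homotopy equivalent to the suspension Σ Ind(G \ N[v]). -/
import Mathlib

open scoped Classical

noncomputable section

/-- The geometric realization of the independence complex of the graph/relation `R` on a
finite vertex type `V`: convex-combination functions whose support is an independent set. -/
def geom {V : Type*} [Fintype V] (R : V → V → Prop) : Set (V → ℝ) :=
  {f | (∀ x, 0 ≤ f x) ∧ (∑ x, f x) = 1 ∧ ∀ x y, f x ≠ 0 → f y ≠ 0 → ¬ R x y}

/-- The relation on `V ⊕ Fin 2` whose independence complex is the join of the independence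
complex of `R` with `S⁰ = Ind(K₂)`, i.e. the unreduced suspension `Σ Ind(R)`. -/
def suspRel {V : Type*} (R : V → V → Prop) : V ⊕ Fin 2 → V ⊕ Fin 2 → Prop :=
  fun x y =>
    match x, y with
    | Sum.inl a, Sum.inl b => R a b
    | Sum.inr a, Sum.inr b => a ≠ b
    | _, _ => False

namespace StmtAux

set_option linter.unusedSectionVars false

variable {V : Type*} [Fintype V] (G : SimpleGraph V) (v : V)

/-- The complement of the closed neighbourhood of `v`. -/
abbrev W : Set V := (G.neighborSet v ∪ {v})ᶜ

lemma mem_W {x : V} : x ∈ W G v ↔ ¬ G.Adj v x ∧ x ≠ v := by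
  simp [W]; tauto

/-- The open neighbourhood of `v` as a finset. -/
abbrev Nv : Finset V := Finset.univ.filter (fun x => G.Adj v x)

lemma v_not_mem_W : v ∉ W G v := by simp [mem_W]

/-- The forward map on ambient spaces. -/
def phi (f : V → ℝ) : ↥(W G v) ⊕ Fin 2 → ℝ :=
  Sum.elim (fun w => f w.1) (fun i => if i = 0 then ∑ x ∈ Nv G v, f x else f v)

variable (u : V)

/-- The backward map on ambient spaces. -/
def psi (g : ↥(W G v) ⊕ Fin 2 → ℝ) : V → ℝ :=
  fun x => if hx : x ∈ W G v then g (Sum.inl ⟨x, hx⟩)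
    else if x = v then g (Sum.inr 1)
    else if x = u then g (Sum.inr 0) else 0

lemma sum_decomp (f : V → ℝ) :
    ∑ x, f x = (∑ w : ↥(W G v), f w.1) + ((∑ x ∈ Nv G v, f x) + f v) := by
  classical
  have h1 := Finset.sum_filter_add_sum_filter_not Finset.univ (fun x => x ∈ W G v) f
  have h2 := Finset.sum_filter_add_sum_filter_not
    (Finset.univ.filter (fun x => x ∉ W G v)) (fun x => G.Adj v x) f
  have e1 : ∑ x ∈ Finset.univ.filter (fun x => x ∈ W G v), f x = ∑ w : ↥(W G v), f w.1 :=
    Finset.sum_subtype _ (fun x => by simp) f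
  have e2 : (Finset.univ.filter (fun x => x ∉ W G v)).filter (fun x => G.Adj v x) = Nv G v := by
    ext x
    simp only [Finset.mem_filter, Finset.mem_univ, true_and, mem_W]
    constructor
    · rintro ⟨-, hx⟩; exact hx
    · intro hx; exact ⟨fun h' => h'.1 hx, hx⟩
  have e3 : (Finset.univ.filter (fun x => x ∉ W G v)).filter (fun x => ¬ G.Adj v x) = {v} := by
    ext x
    simp only [Finset.mem_filter, Finset.mem_univ, true_and, mem_W, Finset.mem_singleton]
    constructor
    · rintro ⟨hx, hadj⟩
      by_contra hne
      exact hx ⟨hadj, hne⟩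
    · rintro rfl; exact ⟨fun h' => h'.2 rfl, G.irrefl⟩
  rw [e2, e3, Finset.sum_singleton] at h2
  rw [← h1, ← h2, e1]

variable {G v u}

lemma u_not_mem_W (hadj : G.Adj u v) : u ∉ W G v := by
  rw [mem_W]; push_neg; intro h'; exact absurd hadj.symm h'

lemma u_mem_Nv (hadj : G.Adj u v) : u ∈ Nv G v := by
  simp only [Finset.mem_filter, Finset.mem_univ, true_and]; exact hadj.symm

-- behaviour of psi
lemma psi_apply_W (g : ↥(W G v) ⊕ Fin 2 → ℝ) {x : V} (hx : x ∈ W G v) :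
    psi G v u g x = g (Sum.inl ⟨x, hx⟩) := dif_pos hx

lemma psi_apply_v (g : ↥(W G v) ⊕ Fin 2 → ℝ) :
    psi G v u g v = g (Sum.inr 1) := by
  rw [psi, dif_neg (v_not_mem_W (G := G) (v := v)), if_pos rfl]

lemma psi_apply_u (hadj : G.Adj u v) (g : ↥(W G v) ⊕ Fin 2 → ℝ) :
    psi G v u g u = g (Sum.inr 0) := by
  rw [psi, dif_neg (u_not_mem_W hadj), if_neg hadj.ne, if_pos rfl]

lemma psi_apply_other (g : ↥(W G v) ⊕ Fin 2 → ℝ) {x : V}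
    (hx : x ∉ W G v) (h1 : x ≠ v) (h2 : x ≠ u) :
    psi G v u g x = 0 := by
  rw [psi, dif_neg hx, if_neg h1, if_neg h2]

lemma sum_Nv_psi (hadj : G.Adj u v) (g : ↥(W G v) ⊕ Fin 2 → ℝ) :
    ∑ x ∈ Nv G v, psi G v u g x = g (Sum.inr 0) := by
  have key : ∀ x ∈ Nv G v, psi G v u g x = if x = u then g (Sum.inr 0) else 0 := by
    intro x hx
    simp only [Finset.mem_filter, Finset.mem_univ, true_and] at hx
    by_cases hxu : x = u
    · subst hxu
      rw [psi_apply_u hadj, if_pos rfl]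
    · rw [psi_apply_other (u := u) g (by rw [mem_W]; push_neg; intro h'; exact absurd hx h')
        (fun h' => G.irrefl (h' ▸ hx)) hxu, if_neg hxu]
  rw [Finset.sum_congr rfl key, Finset.sum_ite_eq' (Nv G v) u (fun _ => g (Sum.inr 0)),
    if_pos (u_mem_Nv hadj)]

-- NEW PART
lemma phi_apply_zero (G : SimpleGraph V) (v : V) (f : V → ℝ) :
    phi G v f (Sum.inr 0) = ∑ x ∈ Nv G v, f x := by simp [phi]

lemma phi_apply_one (G : SimpleGraph V) (v : V) (f : V → ℝ) :
    phi G v f (Sum.inr 1) = f v := by simp [phi]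

lemma phi_mem (G : SimpleGraph V) (v : V) {f : V → ℝ} (hf : f ∈ geom G.Adj) :
    phi G v f ∈ geom (suspRel (G.induce (W G v)).Adj) := by
  obtain ⟨hpos, hsum, hind⟩ := hf
  refine ⟨?_, ?_, ?_⟩
  · rintro (w | i)
    · exact hpos w.1
    · by_cases hi : i = 0
      · subst hi
        rw [phi_apply_zero]
        exact Finset.sum_nonneg fun x _ => hpos x
      · have : i = 1 := by omega
        subst this
        rw [phi_apply_one]
        exact hpos v
  · rw [Fintype.sum_sum_type, Fin.sum_univ_two, phi_apply_zero, phi_apply_one]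
    have : ∀ w : ↥(W G v), phi G v f (Sum.inl w) = f w.1 := fun _ => rfl
    rw [Finset.sum_congr rfl (fun w _ => this w), ← add_assoc] at *
    rw [← hsum, sum_decomp G v f, add_assoc]
  · rintro (w | i) (w' | i') hx hy
    · exact hind w.1 w'.1 hx hy
    · exact not_false
    · exact not_false
    · show ¬ (i ≠ i')
      rw [not_not]
      by_contra hne
      -- one of them is 0, the other 1
      have h0 : phi G v f (Sum.inr 0) ≠ 0 ∧ phi G v f (Sum.inr 1) ≠ 0 := by
        have : (i = 0 ∧ i' = 1) ∨ (i = 1 ∧ i' = 0) := by omega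
        rcases this with ⟨rfl, rfl⟩ | ⟨rfl, rfl⟩
        · exact ⟨hx, hy⟩
        · exact ⟨hy, hx⟩
      rw [phi_apply_zero] at h0
      rw [phi_apply_one] at h0
      obtain ⟨x, hxN, hfx⟩ : ∃ x ∈ Nv G v, f x ≠ 0 := by
        by_contra hc
        push_neg at hc
        exact h0.1 (Finset.sum_eq_zero hc)
      simp only [Finset.mem_filter, Finset.mem_univ, true_and] at hxN
      exact hind x v hfx h0.2 hxN.symm

lemma psi_mem (hadj : G.Adj u v) (hnb : ∀ w, G.Adj u w → w = v)
    {g : ↥(W G v) ⊕ Fin 2 → ℝ} (hg : g ∈ geom (suspRel (G.induce (W G v)).Adj)) :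
    psi G v u g ∈ geom G.Adj := by
  obtain ⟨hpos, hsum, hind⟩ := hg
  refine ⟨?_, ?_, ?_⟩
  · intro x
    rw [psi]
    split_ifs
    · exact hpos _
    · exact hpos _
    · exact hpos _
    · exact le_refl 0
  · rw [sum_decomp G v, sum_Nv_psi hadj, psi_apply_v]
    have e : ∀ w : ↥(W G v), psi G v u g w.1 = g (Sum.inl w) := by
      intro w
      rw [psi_apply_W g w.2]
    rw [Finset.sum_congr rfl (fun w _ => e w)]
    rw [Fintype.sum_sum_type, Fin.sum_univ_two] at hsum
    linarith [hsum]
  · intro x y hx hy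
    -- characterize where psi is nonzero
    have char : ∀ z : V, psi G v u g z ≠ 0 → z ∈ W G v ∨ z = v ∨ z = u := by
      intro z hz
      by_contra hc
      push_neg at hc
      exact hz (psi_apply_other g hc.1 hc.2.1 hc.2.2)
    intro hxy
    rcases char x hx with hxW | hxv | hxu <;> rcases char y hy with hyW | hyv | hyu
    · rw [psi_apply_W g hxW] at hx
      rw [psi_apply_W g hyW] at hy
      exact hind _ _ hx hy hxy
    · rw [hyv] at hxy
      exact ((mem_W G v).mp hxW).1 hxy.symm
    · rw [hyu] at hxy
      rw [hnb x hxy.symm] at hxW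
      exact v_not_mem_W G v hxW
    · rw [hxv] at hxy
      exact ((mem_W G v).mp hyW).1 hxy
    · rw [hxv, hyv] at hxy
      exact G.irrefl hxy
    · rw [hxv] at hx
      rw [hyu] at hy
      rw [psi_apply_v] at hx
      rw [psi_apply_u hadj] at hy
      exact hind _ _ hy hx (by decide : (0 : Fin 2) ≠ 1)
    · rw [hxu] at hxy
      rw [hnb y hxy] at hyW
      exact v_not_mem_W G v hyW
    · rw [hxu] at hx
      rw [hyv] at hy
      rw [psi_apply_u hadj] at hx
      rw [psi_apply_v] at hy
      exact hind _ _ hx hy (by decide : (0 : Fin 2) ≠ 1)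
    · rw [hxu, hyu] at hxy
      exact G.irrefl hxy

lemma phi_psi (hadj : G.Adj u v) (g : ↥(W G v) ⊕ Fin 2 → ℝ) :
    phi G v (psi G v u g) = g := by
  funext x
  rcases x with w | i
  · show psi G v u g w.1 = _
    rw [psi_apply_W g w.2]
  · by_cases hi : i = 0
    · subst hi
      rw [phi_apply_zero, sum_Nv_psi hadj]
    · have : i = 1 := by omega
      subst this
      rw [phi_apply_one, psi_apply_v]


-- the retraction P = psi ∘ phi
lemma P_apply_W (f : V → ℝ) {x : V} (hx : x ∈ W G v) :
    psi G v u (phi G v f) x = f x := by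
  rw [psi_apply_W _ hx]; rfl

lemma P_apply_v (f : V → ℝ) :
    psi G v u (phi G v f) v = f v := by
  rw [psi_apply_v, phi_apply_one]

lemma P_apply_u (hadj : G.Adj u v) (f : V → ℝ) :
    psi G v u (phi G v f) u = ∑ x ∈ Nv G v, f x := by
  rw [psi_apply_u hadj, phi_apply_zero]

lemma P_eq_of_fv_ne (hadj : G.Adj u v) {f : V → ℝ} (hf : f ∈ geom G.Adj)
    (hv : f v ≠ 0) : psi G v u (phi G v f) = f := by
  obtain ⟨hpos, hsum, hind⟩ := hf
  have hzero : ∀ z, G.Adj v z → f z = 0 := by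
    intro z hz
    by_contra hfz
    exact hind v z hv hfz hz
  funext x
  by_cases hxW : x ∈ W G v
  · exact P_apply_W f hxW
  · by_cases hxv : x = v
    · subst hxv; exact P_apply_v f
    · by_cases hxu : x = u
      · have h1 : ∑ x ∈ Nv G v, f x = 0 := by
          refine Finset.sum_eq_zero fun z hz => ?_
          simp only [Finset.mem_filter, Finset.mem_univ, true_and] at hz
          exact hzero z hz
        rw [hxu, P_apply_u hadj, h1]
        exact (hzero u hadj.symm).symm
      · rw [psi_apply_other _ hxW hxv hxu]
        have : G.Adj v x := by
          rw [mem_W] at hxW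
          push_neg at hxW
          by_contra hc
          exact hxv (hxW hc)
        exact (hzero x this).symm

lemma convex_mem (hadj : G.Adj u v) (hnb : ∀ w, G.Adj u w → w = v)
    {f : V → ℝ} (hf : f ∈ geom G.Adj) {a b : ℝ} (ha : 0 ≤ a) (hb : 0 ≤ b)
    (hab : a + b = 1) :
    (fun x => a * f x + b * psi G v u (phi G v f) x) ∈ geom G.Adj := by
  have hP : psi G v u (phi G v f) ∈ geom G.Adj := psi_mem hadj hnb (phi_mem G v hf)
  refine ⟨?_, ?_, ?_⟩
  · intro x
    exact add_nonneg (mul_nonneg ha (hf.1 x)) (mul_nonneg hb (hP.1 x))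
  · rw [Finset.sum_add_distrib, ← Finset.mul_sum, ← Finset.mul_sum, hf.2.1, hP.2.1]
    simpa using hab
  · intro x y hx hy hxy
    by_cases hv : f v = 0
    · have key : ∀ z : V, a * f z + b * psi G v u (phi G v f) z ≠ 0 → f z ≠ 0 ∨ z = u := by
        intro z hz
        by_contra hc
        push_neg at hc
        obtain ⟨hfz, hzu⟩ := hc
        have hPz : psi G v u (phi G v f) z = 0 := by
          by_cases hzW : z ∈ W G v
          · rw [P_apply_W f hzW, hfz]
          · by_cases hzv : z = v
            · subst hzv; rw [P_apply_v f]; exact hv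
            · exact psi_apply_other _ hzW hzv hzu
        rw [hfz, hPz] at hz
        simp at hz
      rcases key x hx with hfx | hxu <;> rcases key y hy with hfy | hyu
      · exact hf.2.2 x y hfx hfy hxy
      · rw [hyu] at hxy
        have : x = v := hnb x hxy.symm
        rw [this] at hfx
        exact hfx hv
      · rw [hxu] at hxy
        have : y = v := hnb y hxy
        rw [this] at hfy
        exact hfy hv
      · rw [hxu, hyu] at hxy
        exact G.irrefl hxy
    · rw [P_eq_of_fv_ne hadj hf hv] at hx hy
      have hfx : f x ≠ 0 := by
        intro h0; apply hx; show a * f x + b * f x = 0; rw [h0]; ring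
      have hfy : f y ≠ 0 := by
        intro h0; apply hy; show a * f y + b * f y = 0; rw [h0]; ring
      exact hf.2.2 x y hfx hfy hxy

-- continuity
lemma phi_continuous (G : SimpleGraph V) (v : V) : Continuous (phi G v) := by
  apply continuous_pi
  rintro (w | i)
  · exact continuous_apply w.1
  · show Continuous fun f : V → ℝ => if i = 0 then ∑ x ∈ Nv G v, f x else f v
    split_ifs
    · exact continuous_finset_sum _ fun x _ => continuous_apply x
    · exact continuous_apply v

lemma psi_continuous (G : SimpleGraph V) (v u : V) : Continuous (psi G v u) := by
  apply continuous_pi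
  intro x
  show Continuous fun g : ↥(W G v) ⊕ Fin 2 → ℝ =>
    if hx : x ∈ W G v then g (Sum.inl ⟨x, hx⟩)
    else if x = v then g (Sum.inr 1)
    else if x = u then g (Sum.inr 0) else 0
  split_ifs
  · exact continuous_apply _
  · exact continuous_apply _
  · exact continuous_apply _
  · exact continuous_const

end StmtAux

/-- If `u` is a vertex of degree 1 in a finite graph `G` and `v` is its unique neighbour
(i.e. `N(u) = {v}`), then `Ind(G)` is homotopy equivalent to the unreduced suspension
`Σ Ind(G \\ N[v])`. -/
theorem stmt_4 {V : Type*} [Fintype V] (G : SimpleGraph V) (u v : V)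
    (h : G.neighborSet u = {v}) :
    Nonempty (ContinuousMap.HomotopyEquiv (geom G.Adj)
      (geom (suspRel (G.induce ((G.neighborSet v ∪ {v})ᶜ)).Adj))) := by
  have hadj : G.Adj u v := by
    rw [← SimpleGraph.mem_neighborSet, h]
    rfl
  have hnb : ∀ w, G.Adj u w → w = v := by
    intro w hw
    have hw' : w ∈ G.neighborSet u := hw
    rwa [h, Set.mem_singleton_iff] at hw'
  refine ⟨?_⟩
  refine
    { toFun := ⟨fun f => ⟨StmtAux.phi G v f.1, StmtAux.phi_mem G v f.2⟩,
        Continuous.subtype_mk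
          ((StmtAux.phi_continuous G v).comp continuous_subtype_val) _⟩
      invFun := ⟨fun g => ⟨StmtAux.psi G v u g.1, StmtAux.psi_mem hadj hnb g.2⟩,
        Continuous.subtype_mk
          ((StmtAux.psi_continuous G v u).comp continuous_subtype_val) _⟩
      left_inv := ?_
      right_inv := ?_ }
  · -- homotopy from psi ∘ phi to id
    refine ⟨{
      toFun := fun p =>
        ⟨fun x => (p.1 : ℝ) * p.2.1 x
            + (1 - (p.1 : ℝ)) * StmtAux.psi G v u (StmtAux.phi G v p.2.1) x,
          StmtAux.convex_mem hadj hnb p.2.2 p.1.2.1 (by linarith [p.1.2.2]) (by ring)⟩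
      continuous_toFun := by
        apply Continuous.subtype_mk
        apply continuous_pi
        intro x
        have ht : Continuous fun p : unitInterval × (geom G.Adj) => (p.1 : ℝ) :=
          continuous_subtype_val.comp continuous_fst
        have hf : Continuous fun p : unitInterval × (geom G.Adj) => (p.2 : V → ℝ) :=
          continuous_subtype_val.comp continuous_snd
        have h1 : Continuous fun p : unitInterval × (geom G.Adj) => p.2.1 x :=
          (continuous_apply x).comp hf
        have h2 : Continuous fun p : unitInterval × (geom G.Adj) =>
            StmtAux.psi G v u (StmtAux.phi G v p.2.1) x :=
          (continuous_apply x).comp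
            (((StmtAux.psi_continuous G v u).comp (StmtAux.phi_continuous G v)).comp hf)
        exact (ht.mul h1).add ((continuous_const.sub ht).mul h2)
      map_zero_left := by
        intro f
        apply Subtype.ext
        funext x
        show (((0 : unitInterval) : ℝ)) * f.1 x
            + (1 - ((0 : unitInterval) : ℝ)) * StmtAux.psi G v u (StmtAux.phi G v f.1) x
          = StmtAux.psi G v u (StmtAux.phi G v f.1) x
        norm_num
      map_one_left := by
        intro f
        apply Subtype.ext
        funext x
        show (((1 : unitInterval) : ℝ)) * f.1 x
            + (1 - ((1 : unitInterval) : ℝ)) * StmtAux.psi G v u (StmtAux.phi G v f.1) x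
          = f.1 x
        norm_num }⟩
  · -- phi ∘ psi is literally the identity
    suffices hs : ∀ F G : C((geom (suspRel (G.induce ((G.neighborSet v ∪ {v})ᶜ)).Adj) : Set _),
        (geom (suspRel (G.induce ((G.neighborSet v ∪ {v})ᶜ)).Adj) : Set _)), F = G → F.Homotopic G by
      apply hs
      ext g
      exact congrFun (StmtAux.phi_psi hadj g.1) _
    intro F G hFG
    rw [hFG]
end
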